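/- Exactly inverting the estimated propensity is suboptimal for the bias–variance objective: setting φ₀ = λβ*β̂/(λ(β*)² + π²), one has T(φ₀, β*) < T(β̂/β*, β*); that is, the choice φ = β̂/β*, which makes (π/β̂)φ equal the exact propensity score π/β*, does not minimize φ ↦ λ(β*φ/β̂ − 1)² + (π²/β̂²)φ² when π > 0. -/

import Mathlib

/-- The bias-variance objective `T(φ, β) = λ(βφ/β̂ − 1)² + (π²/β̂²)φ²`. -/
noncomputable def T (lam bhat pi : ℝ) (φ β : ℝ) : ℝ :=
  lam * (β * φ / bhat - 1) ^ 2 + pi ^ 2 / bhat ^ 2 * φ ^ 2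

/-!
For fixed `β`, `φ ↦ T(φ, β)` is a quadratic with leading coefficient `(λβ² + π²)/β̂² > 0`, so
completing the square shows that `φ₀ = λββ̂/(λβ² + π²)` is its unique minimizer. The exact
inverse `β̂/β` coincides with `φ₀` only when `π² = 0`.
-/

noncomputable def argminT (lam bhat pi β : ℝ) : ℝ :=
  lam * β * bhat / (lam * β ^ 2 + pi ^ 2)

section

variable {lam bhat pi β : ℝ}

theorem T_eq_mul_sq_add (hbhat : bhat ≠ 0) (hD : lam * β ^ 2 + pi ^ 2 ≠ 0) (φ : ℝ) :
    T lam bhat pi φ β = (lam * β ^ 2 + pi ^ 2) / bhat ^ 2 * (φ - argminT lam bhat pi β) ^ 2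
      + lam * pi ^ 2 / (lam * β ^ 2 + pi ^ 2) := by
  unfold T argminT
  field_simp
  ring

theorem T_argminT_lt (hbhat : bhat ≠ 0) (hD : 0 < lam * β ^ 2 + pi ^ 2) {φ : ℝ}
    (hφ : φ ≠ argminT lam bhat pi β) :
    T lam bhat pi (argminT lam bhat pi β) β < T lam bhat pi φ β := by
  rw [T_eq_mul_sq_add hbhat hD.ne', T_eq_mul_sq_add hbhat hD.ne', sub_self]
  have hsq : 0 < (φ - argminT lam bhat pi β) ^ 2 := pow_two_pos_of_ne_zero (sub_ne_zero.2 hφ)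
  have hcoef : 0 < (lam * β ^ 2 + pi ^ 2) / bhat ^ 2 := by positivity
  simpa using mul_pos hcoef hsq

theorem argminT_ne_div (hbhat : bhat ≠ 0) (hβ : β ≠ 0) (hpi : pi ≠ 0)
    (hD : lam * β ^ 2 + pi ^ 2 ≠ 0) : argminT lam bhat pi β ≠ bhat / β := by
  intro h
  rw [argminT, div_eq_div_iff hD hβ] at h
  have : bhat * pi ^ 2 = 0 := by linear_combination -h
  simp_all

end

/-- Exactly inverting the estimated propensity is suboptimal for the bias–variance
objective: with `φ₀ = λβ*β̂/(λ(β*)² + π²)`, one has `T(φ₀, β*) < T(β̂/β*, β*)` whenever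
`π > 0`; that is, the choice `φ = β̂/β*`, which turns `(π/β̂)φ` into the exact propensity
score `π/β*`, does not minimize `φ ↦ T(φ, β*)`. -/
theorem stmt_18 (lam bhat βstar pi : ℝ) (hlam : 0 < lam) (hbhat : 0 < bhat)
    (hβstar : 0 < βstar) (hpi : 0 < pi) :
    T lam bhat pi (lam * βstar * bhat / (lam * βstar ^ 2 + pi ^ 2)) βstar
      < T lam bhat pi (bhat / βstar) βstar := by
  have hD : 0 < lam * βstar ^ 2 + pi ^ 2 := by positivity
  exact T_argminT_lt hbhat.ne' hD
    (argminT_ne_div hbhat.ne' hβstar.ne' hpi.ne' hD.ne').symm
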